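/- Let X₀, X₁, Y₀, Y₁, Z be jointly distributed finite discrete random variables whose joint distribution has the structure of Figure (d), i.e. it factorizes as P(x₀,x₁,y₀,y₁,z) = ∑_{a,b} P(y₀|a)P(y₁|a)P(z|a,b)P(x₀|b)P(x₁|b)P(a)P(b). Then the entropic inequality I(X₀:Z) - I(Y₀:Z) - I(X₁:Z) + I(Y₁:Z) ≤ H(Z) holds. -/

import Mathlib

open Finset

/-- Probability that the random variable `X` takes value `x`, for weights `μ`. -/
noncomputable def prob {Ω α : Type} [Fintype Ω] [Fintype α] [DecidableEq α]
    (μ : Ω → ℝ) (X : Ω → α) (x : α) : ℝ :=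
  ∑ ω, if X ω = x then μ ω else 0

/-- Shannon entropy (base 2) of a finite discrete random variable,
with the convention `0 * log₂ 0 = 0` (since `Real.logb 2 0 = 0`). -/
noncomputable def ent {Ω α : Type} [Fintype Ω] [Fintype α] [DecidableEq α]
    (μ : Ω → ℝ) (X : Ω → α) : ℝ :=
  -∑ x, prob μ X x * Real.logb 2 (prob μ X x)

/-- `μ` is a probability mass function on the finite sample space `Ω`. -/
def IsPMF {Ω : Type} [Fintype Ω] (μ : Ω → ℝ) : Prop :=
  (∀ ω, 0 ≤ μ ω) ∧ ∑ ω, μ ω = 1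

/-- Mutual information `I(X:Y) = H(X) + H(Y) - H(X,Y)`. -/
noncomputable def mutualInfo {Ω α β : Type} [Fintype Ω] [Fintype α] [Fintype β]
    [DecidableEq α] [DecidableEq β] (μ : Ω → ℝ) (X : Ω → α) (Y : Ω → β) : ℝ :=
  ent μ X + ent μ Y - ent μ (fun ω => (X ω, Y ω))

/-- Conditional mutual information
`I(X:Y|Z) = H(X,Z) + H(Y,Z) - H(Z) - H(X,Y,Z)`. -/
noncomputable def condMutualInfo {Ω α β γ : Type} [Fintype Ω] [Fintype α] [Fintype β]
    [Fintype γ] [DecidableEq α] [DecidableEq β] [DecidableEq γ]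
    (μ : Ω → ℝ) (X : Ω → α) (Y : Ω → β) (Z : Ω → γ) : ℝ :=
  ent μ (fun ω => (X ω, Z ω)) + ent μ (fun ω => (Y ω, Z ω)) - ent μ Z
    - ent μ (fun ω => (X ω, Y ω, Z ω))

/-- Conditional entropy `H(X|Y) = H(X,Y) - H(Y)`. -/
noncomputable def condEnt {Ω α β : Type} [Fintype Ω] [Fintype α] [Fintype β]
    [DecidableEq α] [DecidableEq β] (μ : Ω → ℝ) (X : Ω → α) (Y : Ω → β) : ℝ :=
  ent μ (fun ω => (X ω, Y ω)) - ent μ Y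


section PienaarAux

variable {Ω α β γ : Type} [Fintype Ω] [Fintype α] [Fintype β] [Fintype γ]
  [DecidableEq α] [DecidableEq β] [DecidableEq γ]

variable {Ω α β γ : Type} [Fintype Ω] [Fintype α] [Fintype β] [Fintype γ]
  [DecidableEq α] [DecidableEq β] [DecidableEq γ]

lemma prob_nonneg (μ : Ω → ℝ) (h : ∀ ω, 0 ≤ μ ω) (X : Ω → α) (x : α) :
    0 ≤ prob μ X x := by
  apply Finset.sum_nonneg; intro ω _; split <;> simp [h ω]

lemma sum_prob (μ : Ω → ℝ) (X : Ω → α) : ∑ x, prob μ X x = ∑ ω, μ ω := by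
  unfold prob
  rw [Finset.sum_comm]
  refine Finset.sum_congr rfl fun ω _ => ?_
  rw [Finset.sum_ite_eq]; simp

lemma prob_comp (μ : Ω → ℝ) (X : Ω → α) (f : α → β) (b : β) :
    prob μ (fun ω => f (X ω)) b = ∑ a, if f a = b then prob μ X a else 0 := by
  unfold prob
  symm
  calc ∑ a, (if f a = b then ∑ ω, if X ω = a then μ ω else 0 else 0)
      = ∑ a, ∑ ω, (if X ω = a then (if f a = b then μ ω else 0) else 0) := by
        refine Finset.sum_congr rfl fun a _ => ?_; split <;> simp
    _ = ∑ ω, ∑ a, (if X ω = a then (if f a = b then μ ω else 0) else 0) := Finset.sum_comm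
    _ = ∑ ω, (if f (X ω) = b then μ ω else 0) := by
        refine Finset.sum_congr rfl fun ω _ => ?_
        rw [Finset.sum_ite_eq]; simp

lemma prob_comp_ge (μ : Ω → ℝ) (h : ∀ ω, 0 ≤ μ ω) (X : Ω → α) (f : α → β) (a : α) :
    prob μ X a ≤ prob μ (fun ω => f (X ω)) (f a) := by
  conv_rhs => rw [prob_comp]
  have hn : ∀ i ∈ Finset.univ, (0:ℝ) ≤ if f i = f a then prob μ X i else 0 := by
    intro i _; split
    · exact prob_nonneg μ h X i
    · exact le_rfl
  calc prob μ X a = (if f a = f a then prob μ X a else 0) := by simp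
    _ ≤ _ := Finset.single_le_sum hn (Finset.mem_univ a)

lemma ent_congr {Ω' : Type} [Fintype Ω'] (μ : Ω → ℝ) (ν : Ω' → ℝ) (X : Ω → α) (Y : Ω' → α)
    (h : ∀ x, prob μ X x = prob ν Y x) : ent μ X = ent ν Y := by
  unfold ent; simp [h]

lemma ent_comp_sum (μ : Ω → ℝ) (X : Ω → α) (f : α → β) :
    ent μ (fun ω => f (X ω))
      = -∑ a, prob μ X a * Real.logb 2 (prob μ (fun ω => f (X ω)) (f a)) := by
  unfold ent
  congr 1
  calc ∑ b, prob μ (fun ω => f (X ω)) b * Real.logb 2 (prob μ (fun ω => f (X ω)) b)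
      = ∑ b, ∑ a, (if f a = b then prob μ X a * Real.logb 2 (prob μ (fun ω => f (X ω)) b) else 0) := by
        refine Finset.sum_congr rfl fun b _ => ?_
        rw [prob_comp, Finset.sum_mul]
        refine Finset.sum_congr rfl fun a _ => ?_
        split <;> simp
    _ = ∑ a, ∑ b, (if f a = b then prob μ X a * Real.logb 2 (prob μ (fun ω => f (X ω)) b) else 0) :=
        Finset.sum_comm
    _ = ∑ a, prob μ X a * Real.logb 2 (prob μ (fun ω => f (X ω)) (f a)) := by
        refine Finset.sum_congr rfl fun a _ => ?_
        rw [Finset.sum_ite_eq]; simp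

lemma ent_comp_le (μ : Ω → ℝ) (h : ∀ ω, 0 ≤ μ ω) (X : Ω → α) (f : α → β) :
    ent μ (fun ω => f (X ω)) ≤ ent μ X := by
  rw [ent_comp_sum]
  unfold ent
  rw [neg_le_neg_iff]
  refine Finset.sum_le_sum fun a _ => ?_
  rcases eq_or_lt_of_le (prob_nonneg μ h X a) with h0 | h0
  · rw [← h0]; simp
  · have hle := prob_comp_ge μ h X f a
    exact mul_le_mul_of_nonneg_left
      ((Real.logb_le_logb one_lt_two h0 (lt_of_lt_of_le h0 hle)).2 hle) h0.le

lemma ent_comp_equiv (μ : Ω → ℝ) (h : ∀ ω, 0 ≤ μ ω) (X : Ω → α) (e : α ≃ β) :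
    ent μ (fun ω => e (X ω)) = ent μ X := by
  refine le_antisymm (ent_comp_le μ h X e) ?_
  have := ent_comp_le μ h (fun ω => e (X ω)) e.symm
  simpa using this
lemma aux_log_ineq (p q r s : ℝ) (hp : 0 ≤ p) (hpq : p ≤ q) (hpr : p ≤ r) (hqs : q ≤ s) :
    (p - q*r/s)/Real.log 2
      ≤ p*(Real.logb 2 p - Real.logb 2 q - Real.logb 2 r + Real.logb 2 s) := by
  have hL : (0:ℝ) < Real.log 2 := Real.log_pos one_lt_two
  rcases eq_or_lt_of_le hp with h0 | h0
  · have hq : 0 ≤ q := le_trans hp hpq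
    have hr : 0 ≤ r := le_trans hp hpr
    have hs : 0 ≤ s := le_trans hq hqs
    rw [← h0]
    simp only [zero_mul]
    apply div_nonpos_of_nonpos_of_nonneg _ hL.le
    simp only [zero_sub, neg_nonpos]
    positivity
  · have hq : 0 < q := lt_of_lt_of_le h0 hpq
    have hr : 0 < r := lt_of_lt_of_le h0 hpr
    have hs : 0 < s := lt_of_lt_of_le hq hqs
    have key := Real.log_le_sub_one_of_pos (show (0:ℝ) < q*r/(p*s) by positivity)
    have hlog : Real.log (q*r/(p*s)) = Real.log q + Real.log r - Real.log p - Real.log s := by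
      rw [Real.log_div (by positivity) (by positivity), Real.log_mul hq.ne' hr.ne',
        Real.log_mul h0.ne' hs.ne']
      ring
    rw [hlog] at key
    have h1 : p*(Real.log q + Real.log r - Real.log p - Real.log s) ≤ p*(q*r/(p*s) - 1) :=
      mul_le_mul_of_nonneg_left key hp
    have h2 : p*(q*r/(p*s)) = q*r/s := by field_simp
    have main : p - q*r/s ≤ p*(Real.log p - Real.log q - Real.log r + Real.log s) := by
      nlinarith [h1, h2]
    simp only [Real.logb]
    rw [show p * (Real.log p/Real.log 2 - Real.log q/Real.log 2 - Real.log r/Real.log 2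
        + Real.log s/Real.log 2)
      = (p*(Real.log p - Real.log q - Real.log r + Real.log s))/Real.log 2 by ring]
    exact (div_le_div_iff_of_pos_right hL).mpr main

lemma sum_prob_pair_left (μ : Ω → ℝ) (X : Ω → α) (Z : Ω → γ) (z : γ) :
    ∑ x, prob μ (fun ω => (X ω, Z ω)) (x, z) = prob μ Z z := by
  unfold prob
  rw [Finset.sum_comm]
  refine Finset.sum_congr rfl fun ω _ => ?_
  by_cases hz : Z ω = z <;> simp [Prod.ext_iff, hz]

lemma condMutualInfo_nonneg (μ : Ω → ℝ) (hμ : IsPMF μ) (X : Ω → α) (Y : Ω → β) (Z : Ω → γ) :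
    0 ≤ condMutualInfo μ X Y Z := by
  obtain ⟨h0, h1⟩ := hμ
  set T : Ω → α × β × γ := fun ω => (X ω, Y ω, Z ω) with hT
  have e1 : ent μ (fun ω => (X ω, Z ω))
      = -∑ t : α × β × γ, prob μ T t
          * Real.logb 2 (prob μ (fun ω => (X ω, Z ω)) (t.1, t.2.2)) :=
    ent_comp_sum μ T (fun t => (t.1, t.2.2))
  have e2 : ent μ (fun ω => (Y ω, Z ω))
      = -∑ t : α × β × γ, prob μ T t
          * Real.logb 2 (prob μ (fun ω => (Y ω, Z ω)) (t.2.1, t.2.2)) :=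
    ent_comp_sum μ T (fun t => (t.2.1, t.2.2))
  have e3 : ent μ Z
      = -∑ t : α × β × γ, prob μ T t * Real.logb 2 (prob μ Z t.2.2) :=
    ent_comp_sum μ T (fun t => t.2.2)
  have e4 : ent μ (fun ω => (X ω, Y ω, Z ω))
      = -∑ t : α × β × γ, prob μ T t * Real.logb 2 (prob μ T t) := rfl
  unfold condMutualInfo
  rw [e1, e2, e3, e4]
  have comb : ∀ (SA SB SC SD : ℝ), (-SA) + (-SB) - (-SC) - (-SD) = (SD + SC) - (SA + SB) := by
    intros; ring
  rw [comb, ← Finset.sum_add_distrib, ← Finset.sum_add_distrib, ← Finset.sum_sub_distrib]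
  -- termwise lower bound
  have hterm : ∀ t ∈ (Finset.univ : Finset (α × β × γ)),
      (prob μ T t - prob μ (fun ω => (X ω, Z ω)) (t.1, t.2.2)
          * prob μ (fun ω => (Y ω, Z ω)) (t.2.1, t.2.2) / prob μ Z t.2.2)/Real.log 2
      ≤ prob μ T t * Real.logb 2 (prob μ T t) + prob μ T t * Real.logb 2 (prob μ Z t.2.2)
        - (prob μ T t * Real.logb 2 (prob μ (fun ω => (X ω, Z ω)) (t.1, t.2.2))
          + prob μ T t * Real.logb 2 (prob μ (fun ω => (Y ω, Z ω)) (t.2.1, t.2.2))) := by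
    intro t _
    have hpq : prob μ T t ≤ prob μ (fun ω => (X ω, Z ω)) (t.1, t.2.2) :=
      prob_comp_ge μ h0 T (fun t => (t.1, t.2.2)) t
    have hpr : prob μ T t ≤ prob μ (fun ω => (Y ω, Z ω)) (t.2.1, t.2.2) :=
      prob_comp_ge μ h0 T (fun t => (t.2.1, t.2.2)) t
    have hqs : prob μ (fun ω => (X ω, Z ω)) (t.1, t.2.2) ≤ prob μ Z t.2.2 :=
      prob_comp_ge μ h0 (fun ω => (X ω, Z ω)) (fun p => p.2) (t.1, t.2.2)
    have := aux_log_ineq (prob μ T t) (prob μ (fun ω => (X ω, Z ω)) (t.1, t.2.2))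
      (prob μ (fun ω => (Y ω, Z ω)) (t.2.1, t.2.2)) (prob μ Z t.2.2)
      (prob_nonneg μ h0 T t) hpq hpr hqs
    calc _ ≤ _ := this
      _ = _ := by ring
  refine le_trans ?_ (Finset.sum_le_sum hterm)
  -- now show 0 ≤ ∑ (p3 - w)/log 2
  have hL : (0:ℝ) < Real.log 2 := Real.log_pos one_lt_two
  have hsplit : ∑ t : α × β × γ,
      (prob μ T t - prob μ (fun ω => (X ω, Z ω)) (t.1, t.2.2)
          * prob μ (fun ω => (Y ω, Z ω)) (t.2.1, t.2.2) / prob μ Z t.2.2)/Real.log 2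
      = ((∑ t : α × β × γ, prob μ T t)
          - ∑ t : α × β × γ, prob μ (fun ω => (X ω, Z ω)) (t.1, t.2.2)
            * prob μ (fun ω => (Y ω, Z ω)) (t.2.1, t.2.2) / prob μ Z t.2.2)/Real.log 2 := by
    rw [← Finset.sum_sub_distrib, Finset.sum_div]
  rw [hsplit]
  have hp3 : ∑ t : α × β × γ, prob μ T t = 1 := by rw [sum_prob]; exact h1
  have hS : ∑ t : α × β × γ, prob μ (fun ω => (X ω, Z ω)) (t.1, t.2.2)
      * prob μ (fun ω => (Y ω, Z ω)) (t.2.1, t.2.2) / prob μ Z t.2.2 ≤ 1 := by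
    rw [Fintype.sum_prod_type]
    have step : ∀ x : α, ∑ t2 : β × γ, prob μ (fun ω => (X ω, Z ω)) (x, t2.2)
        * prob μ (fun ω => (Y ω, Z ω)) (t2.1, t2.2) / prob μ Z t2.2
        = ∑ z : γ, prob μ (fun ω => (X ω, Z ω)) (x, z) * prob μ Z z / prob μ Z z := by
      intro x
      rw [Fintype.sum_prod_type, Finset.sum_comm]
      refine Finset.sum_congr rfl fun z _ => ?_
      simp only
      rw [← Finset.sum_div, ← Finset.mul_sum, sum_prob_pair_left]
    calc ∑ x : α, ∑ t2 : β × γ, prob μ (fun ω => (X ω, Z ω)) (x, t2.2)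
          * prob μ (fun ω => (Y ω, Z ω)) (t2.1, t2.2) / prob μ Z t2.2
        = ∑ x : α, ∑ z : γ, prob μ (fun ω => (X ω, Z ω)) (x, z) * prob μ Z z / prob μ Z z := by
          exact Finset.sum_congr rfl fun x _ => step x
      _ ≤ ∑ x : α, ∑ z : γ, prob μ (fun ω => (X ω, Z ω)) (x, z) := by
          refine Finset.sum_le_sum fun x _ => Finset.sum_le_sum fun z _ => ?_
          by_cases hz : prob μ Z z = 0
          · simp [hz]
            exact prob_nonneg μ h0 _ _
          · rw [mul_div_assoc, div_self hz, mul_one]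
      _ = ∑ t : α × γ, prob μ (fun ω => (X ω, Z ω)) t := by
          rw [Fintype.sum_prod_type]
      _ = 1 := by rw [sum_prob]; exact h1
  calc (0:ℝ) = (1 - 1)/Real.log 2 := by norm_num
    _ ≤ _ := by
        rw [div_le_div_iff_of_pos_right hL]
        linarith [hS]

lemma prob_le_one (μ : Ω → ℝ) (hμ : IsPMF μ) (X : Ω → α) (x : α) : prob μ X x ≤ 1 := by
  have : ∀ i ∈ (Finset.univ : Finset α), 0 ≤ prob μ X i := fun i _ => prob_nonneg μ hμ.1 X i
  calc prob μ X x ≤ ∑ a, prob μ X a := Finset.single_le_sum this (Finset.mem_univ x)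
    _ = 1 := by rw [sum_prob]; exact hμ.2

lemma mutualInfo_nonneg (μ : Ω → ℝ) (hμ : IsPMF μ) (X : Ω → α) (Y : Ω → β) :
    0 ≤ mutualInfo μ X Y := by
  obtain ⟨h0, h1⟩ := hμ
  set T : Ω → α × β := fun ω => (X ω, Y ω) with hT
  have e1 : ent μ X = -∑ t : α × β, prob μ T t * Real.logb 2 (prob μ X t.1) :=
    ent_comp_sum μ T (fun t => t.1)
  have e2 : ent μ Y = -∑ t : α × β, prob μ T t * Real.logb 2 (prob μ Y t.2) :=
    ent_comp_sum μ T (fun t => t.2)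
  have e3 : ent μ (fun ω => (X ω, Y ω)) = -∑ t : α × β, prob μ T t * Real.logb 2 (prob μ T t) :=
    rfl
  unfold mutualInfo
  rw [e1, e2, e3]
  rw [show ∀ (SA SB SC : ℝ), (-SA) + (-SB) - (-SC) = SC - (SA + SB) from fun _ _ _ => by ring,
    ← Finset.sum_add_distrib, ← Finset.sum_sub_distrib]
  have hterm : ∀ t ∈ (Finset.univ : Finset (α × β)),
      (prob μ T t - prob μ X t.1 * prob μ Y t.2 / 1)/Real.log 2
      ≤ prob μ T t * Real.logb 2 (prob μ T t)
        - (prob μ T t * Real.logb 2 (prob μ X t.1) + prob μ T t * Real.logb 2 (prob μ Y t.2)) := by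
    intro t _
    have hpq : prob μ T t ≤ prob μ X t.1 := prob_comp_ge μ h0 T (fun t => t.1) t
    have hpr : prob μ T t ≤ prob μ Y t.2 := prob_comp_ge μ h0 T (fun t => t.2) t
    have hqs : prob μ X t.1 ≤ 1 := prob_le_one μ ⟨h0, h1⟩ X t.1
    have := aux_log_ineq (prob μ T t) (prob μ X t.1) (prob μ Y t.2) 1
      (prob_nonneg μ h0 T t) hpq hpr hqs
    calc _ ≤ _ := this
      _ = _ := by rw [Real.logb_one]; ring
  refine le_trans ?_ (Finset.sum_le_sum hterm)
  have hL : (0:ℝ) < Real.log 2 := Real.log_pos one_lt_two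
  have hsum1 : ∑ t : α × β, prob μ T t = 1 := by rw [sum_prob]; exact h1
  have hsum2 : ∑ t : α × β, prob μ X t.1 * prob μ Y t.2 = 1 := by
    rw [Fintype.sum_prod_type]
    calc ∑ x, ∑ y, prob μ X x * prob μ Y y = ∑ x, prob μ X x * ∑ y, prob μ Y y := by
          refine Finset.sum_congr rfl fun x _ => ?_; rw [Finset.mul_sum]
      _ = 1 := by
          rw [sum_prob μ Y, h1]
          simp only [mul_one]
          rw [sum_prob]; exact h1
  simp only [div_one]
  have heq : ∑ t : α × β, (prob μ T t - prob μ X t.1 * prob μ Y t.2)/Real.log 2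
      = ((∑ t : α × β, prob μ T t) - ∑ t : α × β, prob μ X t.1 * prob μ Y t.2)/Real.log 2 := by
    rw [← Finset.sum_div, Finset.sum_sub_distrib]
  rw [heq, hsum1, hsum2]
  simp

lemma logb_mul_expand (x y : ℝ) :
    x*y*Real.logb 2 (x*y) = x*y*Real.logb 2 x + x*y*Real.logb 2 y := by
  rcases eq_or_ne x 0 with hx | hx
  · simp [hx]
  rcases eq_or_ne y 0 with hy | hy
  · simp [hy]
  rw [Real.logb, Real.log_mul hx hy]
  unfold Real.logb
  ring

lemma sum3_factor (F : α → γ → ℝ) (G : β → γ → ℝ) (hG : ∀ w, ∑ y, G y w = 1) :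
    ∑ t : α × β × γ, F t.1 t.2.2 * G t.2.1 t.2.2 = ∑ p : α × γ, F p.1 p.2 := by
  simp only [Fintype.sum_prod_type]
  refine Finset.sum_congr rfl fun x _ => ?_
  rw [Finset.sum_comm]
  refine Finset.sum_congr rfl fun z _ => ?_
  rw [← Finset.mul_sum, hG, mul_one]

lemma sum3_factor' (F : β → γ → ℝ) (G : α → γ → ℝ) (hG : ∀ w, ∑ x, G x w = 1) :
    ∑ t : α × β × γ, G t.1 t.2.2 * F t.2.1 t.2.2 = ∑ p : β × γ, F p.1 p.2 := by
  simp only [Fintype.sum_prod_type]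
  rw [Finset.sum_comm]
  refine Finset.sum_congr rfl fun y _ => ?_
  rw [Finset.sum_comm]
  refine Finset.sum_congr rfl fun z _ => ?_
  rw [← Finset.sum_mul, hG, one_mul]

lemma sum2_factor (F : γ → ℝ) (G : α → γ → ℝ) (hG : ∀ w, ∑ x, G x w = 1) :
    ∑ p : α × γ, G p.1 p.2 * F p.2 = ∑ z, F z := by
  simp only [Fintype.sum_prod_type]
  rw [Finset.sum_comm]
  refine Finset.sum_congr rfl fun z _ => ?_
  rw [← Finset.sum_mul, hG, one_mul]

lemma condMutualInfo_eq_zero_of_product (μ : Ω → ℝ) (U : Ω → α) (V : Ω → β) (W : Ω → γ)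
    (f : α → γ → ℝ) (g : β → γ → ℝ) (h : γ → ℝ)
    (hjoint : ∀ u v w, prob μ (fun ω => (U ω, V ω, W ω)) (u, v, w) = f u w * g v w * h w)
    (hf1 : ∀ w, ∑ u, f u w = 1) (hg1 : ∀ w, ∑ v, g v w = 1) :
    condMutualInfo μ U V W = 0 := by
  have mUW : ∀ p : α × γ, prob μ (fun ω => (U ω, W ω)) p = f p.1 p.2 * h p.2 := by
    rintro ⟨u, w⟩
    have hc : prob μ (fun ω => (U ω, W ω)) (u, w)
        = ∑ t : α × β × γ, if (t.1, t.2.2) = (u, w)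
            then prob μ (fun ω => (U ω, V ω, W ω)) t else 0 :=
      prob_comp μ (fun ω => (U ω, V ω, W ω)) (fun t => (t.1, t.2.2)) (u, w)
    rw [hc]
    simp only [Fintype.sum_prod_type, Prod.mk.injEq, ite_and, hjoint, Finset.sum_ite_irrel,
      Finset.sum_const_zero, Finset.sum_ite_eq', Finset.mem_univ, if_true]
    calc ∑ y, f u w * g y w * h w = (f u w * h w) * ∑ y, g y w := by
          rw [Finset.mul_sum]; exact Finset.sum_congr rfl fun y _ => by ring
      _ = f u w * h w := by rw [hg1, mul_one]
  have mVW : ∀ p : β × γ, prob μ (fun ω => (V ω, W ω)) p = g p.1 p.2 * h p.2 := by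
    rintro ⟨v, w⟩
    have hc : prob μ (fun ω => (V ω, W ω)) (v, w)
        = ∑ t : α × β × γ, if (t.2.1, t.2.2) = (v, w)
            then prob μ (fun ω => (U ω, V ω, W ω)) t else 0 :=
      prob_comp μ (fun ω => (U ω, V ω, W ω)) (fun t => (t.2.1, t.2.2)) (v, w)
    rw [hc]
    simp only [Fintype.sum_prod_type, Prod.mk.injEq, ite_and, hjoint, Finset.sum_ite_irrel,
      Finset.sum_const_zero, Finset.sum_ite_eq', Finset.mem_univ, if_true]
    calc ∑ x, f x w * g v w * h w = (g v w * h w) * ∑ x, f x w := by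
          rw [Finset.mul_sum]; exact Finset.sum_congr rfl fun x _ => by ring
      _ = g v w * h w := by rw [hf1, mul_one]
  have mW : ∀ w, prob μ W w = h w := by
    intro w
    have hc : prob μ W w
        = ∑ t : α × β × γ, if t.2.2 = w
            then prob μ (fun ω => (U ω, V ω, W ω)) t else 0 :=
      prob_comp μ (fun ω => (U ω, V ω, W ω)) (fun t => t.2.2) w
    rw [hc]
    simp only [Fintype.sum_prod_type, hjoint, Finset.sum_ite_irrel,
      Finset.sum_const_zero, Finset.sum_ite_eq', Finset.mem_univ, if_true]
    calc ∑ x, ∑ y, f x w * g y w * h w = ∑ x, f x w * h w * ∑ y, g y w := by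
          refine Finset.sum_congr rfl fun x _ => ?_
          rw [Finset.mul_sum]; exact Finset.sum_congr rfl fun y _ => by ring
      _ = h w * ∑ x, f x w := by
          rw [Finset.mul_sum]
          exact Finset.sum_congr rfl fun x _ => by rw [hg1]; ring
      _ = h w := by rw [hf1, mul_one]
  set A : ℝ := ∑ p : α × γ, f p.1 p.2 * h p.2 * Real.logb 2 (f p.1 p.2) with hA
  set B : ℝ := ∑ p : β × γ, g p.1 p.2 * h p.2 * Real.logb 2 (g p.1 p.2) with hB
  set C : ℝ := ∑ w, h w * Real.logb 2 (h w) with hC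
  have eW : ent μ W = -C := by
    unfold ent; rw [hC]; congr 1; exact Finset.sum_congr rfl fun w _ => by rw [mW]
  have eUW : ent μ (fun ω => (U ω, W ω)) = -(A + C) := by
    unfold ent
    congr 1
    calc ∑ p : α × γ, prob μ (fun ω => (U ω, W ω)) p
            * Real.logb 2 (prob μ (fun ω => (U ω, W ω)) p)
        = ∑ p : α × γ, (f p.1 p.2 * h p.2 * Real.logb 2 (f p.1 p.2)
            + f p.1 p.2 * (h p.2 * Real.logb 2 (h p.2))) := by
          refine Finset.sum_congr rfl fun p _ => ?_
          rw [mUW p, logb_mul_expand]; ring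
      _ = A + C := by
          have k1 : ∑ x : α × γ, f x.1 x.2 * (h x.2 * Real.logb 2 (h x.2)) = C :=
            (sum2_factor (fun z => h z * Real.logb 2 (h z)) f hf1).trans hC.symm
          rw [Finset.sum_add_distrib, k1, ← hA]
  have eVW : ent μ (fun ω => (V ω, W ω)) = -(B + C) := by
    unfold ent
    congr 1
    calc ∑ p : β × γ, prob μ (fun ω => (V ω, W ω)) p
            * Real.logb 2 (prob μ (fun ω => (V ω, W ω)) p)
        = ∑ p : β × γ, (g p.1 p.2 * h p.2 * Real.logb 2 (g p.1 p.2)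
            + g p.1 p.2 * (h p.2 * Real.logb 2 (h p.2))) := by
          refine Finset.sum_congr rfl fun p _ => ?_
          rw [mVW p, logb_mul_expand]; ring
      _ = B + C := by
          have k1 : ∑ x : β × γ, g x.1 x.2 * (h x.2 * Real.logb 2 (h x.2)) = C :=
            (sum2_factor (fun z => h z * Real.logb 2 (h z)) g hg1).trans hC.symm
          rw [Finset.sum_add_distrib, k1, ← hB]
  have mUVW : ∀ t : α × β × γ, prob μ (fun ω => (U ω, V ω, W ω)) t
      = f t.1 t.2.2 * g t.2.1 t.2.2 * h t.2.2 := by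
    rintro ⟨u, v, w⟩; exact hjoint u v w
  have expand3 : ∀ (x y z : ℝ), x*y*z*Real.logb 2 (x*y*z)
      = (x*z*Real.logb 2 x)*y + x*(y*z*Real.logb 2 y) + (x*(z*Real.logb 2 z))*y := by
    intro x y z
    have h1 := logb_mul_expand (x*y) z
    have h2 := logb_mul_expand x y
    linear_combination h1 + z * h2
  have eUVW : ent μ (fun ω => (U ω, V ω, W ω)) = -(A + B + C) := by
    unfold ent
    congr 1
    calc ∑ t : α × β × γ, prob μ (fun ω => (U ω, V ω, W ω)) t
            * Real.logb 2 (prob μ (fun ω => (U ω, V ω, W ω)) t)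
        = ∑ t : α × β × γ,
            ((f t.1 t.2.2 * h t.2.2 * Real.logb 2 (f t.1 t.2.2)) * g t.2.1 t.2.2
              + f t.1 t.2.2 * (g t.2.1 t.2.2 * h t.2.2 * Real.logb 2 (g t.2.1 t.2.2))
              + (f t.1 t.2.2 * (h t.2.2 * Real.logb 2 (h t.2.2))) * g t.2.1 t.2.2) := by
          refine Finset.sum_congr rfl fun t _ => ?_
          rw [mUVW t]
          exact expand3 _ _ _
      _ = A + B + C := by
          have k1 : ∑ t : α × β × γ,
              (f t.1 t.2.2 * h t.2.2 * Real.logb 2 (f t.1 t.2.2)) * g t.2.1 t.2.2 = A :=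
            (sum3_factor (fun u w => f u w * h w * Real.logb 2 (f u w)) g hg1).trans hA.symm
          have k2 : ∑ t : α × β × γ,
              f t.1 t.2.2 * (g t.2.1 t.2.2 * h t.2.2 * Real.logb 2 (g t.2.1 t.2.2)) = B :=
            (sum3_factor' (fun v w => g v w * h w * Real.logb 2 (g v w)) f hf1).trans hB.symm
          have k3 : ∑ t : α × β × γ,
              (f t.1 t.2.2 * (h t.2.2 * Real.logb 2 (h t.2.2))) * g t.2.1 t.2.2 = C :=
            ((sum3_factor (fun u w => f u w * (h w * Real.logb 2 (h w))) g hg1).trans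
              (sum2_factor (fun z => h z * Real.logb 2 (h z)) f hf1)).trans hC.symm
          rw [Finset.sum_add_distrib, Finset.sum_add_distrib, k1, k2, k3]
  unfold condMutualInfo
  rw [eUW, eVW, eW, eUVW]
  ring

lemma ent_swap (μ : Ω → ℝ) (h0 : ∀ ω, 0 ≤ μ ω) (X : Ω → α) (Y : Ω → β) :
    ent μ (fun ω => (X ω, Y ω)) = ent μ (fun ω => (Y ω, X ω)) :=
  ent_comp_equiv μ h0 (fun ω => (Y ω, X ω)) (Equiv.prodComm β α)

lemma ent_rev3 (μ : Ω → ℝ) (h0 : ∀ ω, 0 ≤ μ ω) (X : Ω → α) (Y : Ω → β) (Z : Ω → γ) :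
    ent μ (fun ω => (X ω, Y ω, Z ω)) = ent μ (fun ω => (Z ω, Y ω, X ω)) :=
  ent_comp_equiv μ h0 (fun ω => (Z ω, Y ω, X ω))
    ⟨fun p => (p.2.2, p.2.1, p.1), fun p => (p.2.2, p.2.1, p.1), fun _ => rfl, fun _ => rfl⟩

lemma mutualInfo_le_of_condIndep (μ : Ω → ℝ) (hμ : IsPMF μ)
    (X : Ω → α) (Z : Ω → γ) (B : Ω → β)
    (hzero : condMutualInfo μ X Z B = 0) : mutualInfo μ X Z ≤ mutualInfo μ B Z := by
  have hnn := condMutualInfo_nonneg μ hμ B Z X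
  have s1 : ent μ (fun ω => (B ω, X ω)) = ent μ (fun ω => (X ω, B ω)) :=
    ent_swap μ hμ.1 B X
  have s2 : ent μ (fun ω => (Z ω, X ω)) = ent μ (fun ω => (X ω, Z ω)) :=
    ent_swap μ hμ.1 Z X
  have s3 : ent μ (fun ω => (Z ω, B ω)) = ent μ (fun ω => (B ω, Z ω)) :=
    ent_swap μ hμ.1 Z B
  have s4 : ent μ (fun ω => (B ω, Z ω, X ω)) = ent μ (fun ω => (X ω, Z ω, B ω)) :=
    ent_rev3 μ hμ.1 B Z X
  unfold condMutualInfo at hnn hzero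
  unfold mutualInfo
  linarith [hnn, hzero, s1, s2, s3, s4]

lemma sum2_factor' (F : α → ℝ) (G : β → ℝ) (hG : ∑ y, G y = 1) :
    ∑ p : α × β, F p.1 * G p.2 = ∑ x, F x := by
  simp only [Fintype.sum_prod_type]
  exact Finset.sum_congr rfl fun x _ => by rw [← Finset.mul_sum, hG, mul_one]

lemma sum2_factor'' (F : β → ℝ) (G : α → ℝ) (hG : ∑ x, G x = 1) :
    ∑ p : α × β, G p.1 * F p.2 = ∑ y, F y := by
  simp only [Fintype.sum_prod_type]
  rw [Finset.sum_comm]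
  exact Finset.sum_congr rfl fun y _ => by rw [← Finset.sum_mul, hG, one_mul]

lemma ent_pair_eq_add (μ : Ω → ℝ) (U : Ω → α) (V : Ω → β) (pU : α → ℝ) (pV : β → ℝ)
    (hUV : ∀ p : α × β, prob μ (fun ω => (U ω, V ω)) p = pU p.1 * pV p.2)
    (hU : ∀ u, prob μ U u = pU u) (hV : ∀ v, prob μ V v = pV v)
    (hU1 : ∑ u, pU u = 1) (hV1 : ∑ v, pV v = 1) :
    ent μ (fun ω => (U ω, V ω)) = ent μ U + ent μ V := by
  unfold ent
  simp only [hUV, hU, hV]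
  have e : ∑ p : α × β, pU p.1 * pV p.2 * Real.logb 2 (pU p.1 * pV p.2)
      = ∑ p : α × β, ((pU p.1 * Real.logb 2 (pU p.1)) * pV p.2
          + pU p.1 * (pV p.2 * Real.logb 2 (pV p.2))) := by
    refine Finset.sum_congr rfl fun p _ => ?_
    rw [logb_mul_expand]; ring
  have k1 : ∑ p : α × β, (pU p.1 * Real.logb 2 (pU p.1)) * pV p.2
      = ∑ u, pU u * Real.logb 2 (pU u) :=
    sum2_factor' (fun u => pU u * Real.logb 2 (pU u)) pV hV1
  have k2 : ∑ p : α × β, pU p.1 * (pV p.2 * Real.logb 2 (pV p.2))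
      = ∑ v, pV v * Real.logb 2 (pV v) :=
    sum2_factor'' (fun v => pV v * Real.logb 2 (pV v)) pU hU1
  rw [e, Finset.sum_add_distrib, k1, k2]
  ring

lemma sum3_const {ι1 ι2 ι3 : Type} [Fintype ι1] [Fintype ι2] [Fintype ι3]
    (f1 : ι1 → ℝ) (f2 : ι2 → ℝ) (f3 : ι3 → ℝ) (c : ℝ) :
    ∑ i1, ∑ i2, ∑ i3, f1 i1 * f2 i2 * f3 i3 * c
      = (∑ i1, f1 i1) * (∑ i2, f2 i2) * (∑ i3, f3 i3) * c := by
  calc ∑ i1, ∑ i2, ∑ i3, f1 i1 * f2 i2 * f3 i3 * c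
      = ∑ i1, f1 i1 * (∑ i2, f2 i2 * (∑ i3, f3 i3 * c)) := by
        simp only [Finset.mul_sum]
        refine Finset.sum_congr rfl fun i1 _ => ?_
        refine Finset.sum_congr rfl fun i2 _ => ?_
        refine Finset.sum_congr rfl fun i3 _ => ?_
        ring
    _ = (∑ i1, f1 i1) * ((∑ i2, f2 i2) * ((∑ i3, f3 i3) * c)) := by
        rw [show ∑ i3, f3 i3 * c = (∑ i3, f3 i3) * c from (Finset.sum_mul _ _ _).symm,
          show ∑ i2, f2 i2 * ((∑ i3, f3 i3) * c) = (∑ i2, f2 i2) * ((∑ i3, f3 i3) * c)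
            from (Finset.sum_mul _ _ _).symm,
          show ∑ i1, f1 i1 * ((∑ i2, f2 i2) * ((∑ i3, f3 i3) * c))
              = (∑ i1, f1 i1) * ((∑ i2, f2 i2) * ((∑ i3, f3 i3) * c))
            from (Finset.sum_mul _ _ _).symm]
    _ = (∑ i1, f1 i1) * (∑ i2, f2 i2) * (∑ i3, f3 i3) * c := by ring

lemma sum5_const {ι1 ι2 ι3 ι4 ι5 : Type} [Fintype ι1] [Fintype ι2] [Fintype ι3]
    [Fintype ι4] [Fintype ι5]
    (f1 : ι1 → ℝ) (f2 : ι2 → ℝ) (f3 : ι3 → ℝ) (f4 : ι4 → ℝ) (f5 : ι5 → ℝ) (c : ℝ) :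
    ∑ i1, ∑ i2, ∑ i3, ∑ i4, ∑ i5, f1 i1 * f2 i2 * f3 i3 * f4 i4 * f5 i5 * c
      = (∑ i1, f1 i1) * (∑ i2, f2 i2) * (∑ i3, f3 i3) * (∑ i4, f4 i4) * (∑ i5, f5 i5) * c := by
  calc ∑ i1, ∑ i2, ∑ i3, ∑ i4, ∑ i5, f1 i1 * f2 i2 * f3 i3 * f4 i4 * f5 i5 * c
      = ∑ i1, f1 i1 * (∑ i2, f2 i2 * (∑ i3, f3 i3 * (∑ i4, f4 i4 * (∑ i5, f5 i5 * c)))) := by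
        simp only [Finset.mul_sum]
        refine Finset.sum_congr rfl fun i1 _ => ?_
        refine Finset.sum_congr rfl fun i2 _ => ?_
        refine Finset.sum_congr rfl fun i3 _ => ?_
        refine Finset.sum_congr rfl fun i4 _ => ?_
        refine Finset.sum_congr rfl fun i5 _ => ?_
        ring
    _ = (∑ i1, f1 i1) * ((∑ i2, f2 i2) * ((∑ i3, f3 i3) * ((∑ i4, f4 i4) * ((∑ i5, f5 i5) * c)))) := by
        rw [show ∑ i5, f5 i5 * c = (∑ i5, f5 i5) * c from (Finset.sum_mul _ _ _).symm,
          show ∑ i4, f4 i4 * ((∑ i5, f5 i5) * c) = (∑ i4, f4 i4) * ((∑ i5, f5 i5) * c)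
            from (Finset.sum_mul _ _ _).symm,
          show ∑ i3, f3 i3 * ((∑ i4, f4 i4) * ((∑ i5, f5 i5) * c))
              = (∑ i3, f3 i3) * ((∑ i4, f4 i4) * ((∑ i5, f5 i5) * c))
            from (Finset.sum_mul _ _ _).symm,
          show ∑ i2, f2 i2 * ((∑ i3, f3 i3) * ((∑ i4, f4 i4) * ((∑ i5, f5 i5) * c)))
              = (∑ i2, f2 i2) * ((∑ i3, f3 i3) * ((∑ i4, f4 i4) * ((∑ i5, f5 i5) * c)))
            from (Finset.sum_mul _ _ _).symm,
          show ∑ i1, f1 i1 * ((∑ i2, f2 i2) * ((∑ i3, f3 i3) * ((∑ i4, f4 i4) * ((∑ i5, f5 i5) * c))))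
              = (∑ i1, f1 i1) * ((∑ i2, f2 i2) * ((∑ i3, f3 i3) * ((∑ i4, f4 i4) * ((∑ i5, f5 i5) * c))))
            from (Finset.sum_mul _ _ _).symm]
    _ = (∑ i1, f1 i1) * (∑ i2, f2 i2) * (∑ i3, f3 i3) * (∑ i4, f4 i4) * (∑ i5, f5 i5) * c := by
        ring

end PienaarAux

/-- For the post-selected causal structure of Figure (d): X₀, X₁ children of
the latent B only, Y₀, Y₁ children of the latent A only, Z a child of both,
with A and B independent, the entropic inequality
I(X₀:Z) - I(Y₀:Z) - I(X₁:Z) + I(Y₁:Z) ≤ H(Z) holds. -/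
theorem pienaar_entropic_inequality
    {Ω A B tX tY tZ : Type} [Fintype Ω] [Fintype A] [Fintype B]
    [Fintype tX] [Fintype tY] [Fintype tZ]
    [DecidableEq tX] [DecidableEq tY] [DecidableEq tZ]
    (μ : Ω → ℝ) (hμ : IsPMF μ)
    (X0 X1 : Ω → tX) (Y0 Y1 : Ω → tY) (Z : Ω → tZ)
    (pA : A → ℝ) (pB : B → ℝ)
    (hpA0 : ∀ av, 0 ≤ pA av) (hpA1 : ∑ av, pA av = 1)
    (hpB0 : ∀ bv, 0 ≤ pB bv) (hpB1 : ∑ bv, pB bv = 1)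
    (qY0 qY1 : A → tY → ℝ) (qX0 qX1 : B → tX → ℝ) (qZ : A → B → tZ → ℝ)
    (hqY00 : ∀ av yv, 0 ≤ qY0 av yv) (hqY01 : ∀ av, ∑ yv, qY0 av yv = 1)
    (hqY10 : ∀ av yv, 0 ≤ qY1 av yv) (hqY11 : ∀ av, ∑ yv, qY1 av yv = 1)
    (hqX00 : ∀ bv xv, 0 ≤ qX0 bv xv) (hqX01 : ∀ bv, ∑ xv, qX0 bv xv = 1)
    (hqX10 : ∀ bv xv, 0 ≤ qX1 bv xv) (hqX11 : ∀ bv, ∑ xv, qX1 bv xv = 1)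
    (hqZ0 : ∀ av bv zv, 0 ≤ qZ av bv zv) (hqZ1 : ∀ av bv, ∑ zv, qZ av bv zv = 1)
    (hfact : ∀ (xv0 xv1 : tX) (yv0 yv1 : tY) (zv : tZ),
      prob μ (fun ω => (X0 ω, X1 ω, Y0 ω, Y1 ω, Z ω)) (xv0, xv1, yv0, yv1, zv)
        = ∑ av, ∑ bv, qY0 av yv0 * qY1 av yv1 * qZ av bv zv
            * qX0 bv xv0 * qX1 bv xv1 * pA av * pB bv) :
    mutualInfo μ X0 Z - mutualInfo μ Y0 Z - mutualInfo μ X1 Z + mutualInfo μ Y1 Z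
      ≤ ent μ Z := by
  classical
  set ν : A × B × tX × tX × tY × tY × tZ → ℝ := fun ω =>
    qY0 ω.1 ω.2.2.2.2.1 * qY1 ω.1 ω.2.2.2.2.2.1 * qZ ω.1 ω.2.1 ω.2.2.2.2.2.2
      * qX0 ω.2.1 ω.2.2.1 * qX1 ω.2.1 ω.2.2.2.1 * pA ω.1 * pB ω.2.1 with hνdef
  set V5 : A × B × tX × tX × tY × tY × tZ → tX × tX × tY × tY × tZ := fun ω' =>
    (ω'.2.2.1, ω'.2.2.2.1, ω'.2.2.2.2.1, ω'.2.2.2.2.2.1, ω'.2.2.2.2.2.2) with hV5def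
  have hV5 : ∀ t : tX × tX × tY × tY × tZ,
      prob ν V5 t = prob μ (fun ω => (X0 ω, X1 ω, Y0 ω, Y1 ω, Z ω)) t := by
    rintro ⟨xv0, xv1, yv0, yv1, zv⟩
    rw [hfact]
    unfold prob
    simp only [hV5def, hνdef, Fintype.sum_prod_type, Prod.mk.injEq, ite_and,
      Finset.sum_ite_irrel, Finset.sum_const_zero, Finset.sum_ite_eq', Finset.mem_univ, if_true]
  have hν0 : ∀ ω', 0 ≤ ν ω' := by
    intro ω'
    rw [hνdef]
    exact mul_nonneg (mul_nonneg (mul_nonneg (mul_nonneg (mul_nonneg (mul_nonneg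
      (hqY00 _ _) (hqY10 _ _)) (hqZ0 _ _ _)) (hqX00 _ _)) (hqX10 _ _)) (hpA0 _)) (hpB0 _)
  have hν1 : ∑ ω', ν ω' = 1 := by
    rw [← sum_prob ν V5]
    calc ∑ t, prob ν V5 t = ∑ t, prob μ (fun ω => (X0 ω, X1 ω, Y0 ω, Y1 ω, Z ω)) t :=
          Finset.sum_congr rfl fun t _ => hV5 t
      _ = ∑ ω, μ ω := sum_prob μ _
      _ = 1 := hμ.2
  have hνP : IsPMF ν := ⟨hν0, hν1⟩
  have htrans : ∀ (δ : Type) [Fintype δ] [DecidableEq δ] (g : tX × tX × tY × tY × tZ → δ),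
      ent μ (fun ω => g (X0 ω, X1 ω, Y0 ω, Y1 ω, Z ω)) = ent ν (fun ω' => g (V5 ω')) := by
    intro δ _ _ g
    refine ent_congr μ ν _ _ fun d => ?_
    have L : prob μ (fun ω => g (X0 ω, X1 ω, Y0 ω, Y1 ω, Z ω)) d
        = ∑ t, if g t = d then prob μ (fun ω => (X0 ω, X1 ω, Y0 ω, Y1 ω, Z ω)) t else 0 :=
      prob_comp μ _ g d
    have R : prob ν (fun ω' => g (V5 ω')) d = ∑ t, if g t = d then prob ν V5 t else 0 :=
      prob_comp ν V5 g d
    rw [L, R]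
    exact Finset.sum_congr rfl fun t _ => by rw [hV5 t]
  -- transfers of the five entropic quantities
  have m0 : mutualInfo μ X0 Z
      = mutualInfo ν (fun ω' => ω'.2.2.1) (fun ω' => ω'.2.2.2.2.2.2) := by
    have a1 : ent μ X0 = ent ν (fun ω' => ω'.2.2.1) := htrans _ (fun t => t.1)
    have a2 : ent μ Z = ent ν (fun ω' => ω'.2.2.2.2.2.2) := htrans _ (fun t => t.2.2.2.2)
    have a3 : ent μ (fun ω => (X0 ω, Z ω))
        = ent ν (fun ω' => (ω'.2.2.1, ω'.2.2.2.2.2.2)) := htrans _ (fun t => (t.1, t.2.2.2.2))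
    unfold mutualInfo
    rw [a1, a2, a3]
  have m1 : mutualInfo μ X1 Z
      = mutualInfo ν (fun ω' => ω'.2.2.2.1) (fun ω' => ω'.2.2.2.2.2.2) := by
    have a1 : ent μ X1 = ent ν (fun ω' => ω'.2.2.2.1) := htrans _ (fun t => t.2.1)
    have a2 : ent μ Z = ent ν (fun ω' => ω'.2.2.2.2.2.2) := htrans _ (fun t => t.2.2.2.2)
    have a3 : ent μ (fun ω => (X1 ω, Z ω))
        = ent ν (fun ω' => (ω'.2.2.2.1, ω'.2.2.2.2.2.2)) :=
      htrans _ (fun t => (t.2.1, t.2.2.2.2))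
    unfold mutualInfo
    rw [a1, a2, a3]
  have mY0 : mutualInfo μ Y0 Z
      = mutualInfo ν (fun ω' => ω'.2.2.2.2.1) (fun ω' => ω'.2.2.2.2.2.2) := by
    have a1 : ent μ Y0 = ent ν (fun ω' => ω'.2.2.2.2.1) := htrans _ (fun t => t.2.2.1)
    have a2 : ent μ Z = ent ν (fun ω' => ω'.2.2.2.2.2.2) := htrans _ (fun t => t.2.2.2.2)
    have a3 : ent μ (fun ω => (Y0 ω, Z ω))
        = ent ν (fun ω' => (ω'.2.2.2.2.1, ω'.2.2.2.2.2.2)) :=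
      htrans _ (fun t => (t.2.2.1, t.2.2.2.2))
    unfold mutualInfo
    rw [a1, a2, a3]
  have mY1 : mutualInfo μ Y1 Z
      = mutualInfo ν (fun ω' => ω'.2.2.2.2.2.1) (fun ω' => ω'.2.2.2.2.2.2) := by
    have a1 : ent μ Y1 = ent ν (fun ω' => ω'.2.2.2.2.2.1) := htrans _ (fun t => t.2.2.2.1)
    have a2 : ent μ Z = ent ν (fun ω' => ω'.2.2.2.2.2.2) := htrans _ (fun t => t.2.2.2.2)
    have a3 : ent μ (fun ω => (Y1 ω, Z ω))
        = ent ν (fun ω' => (ω'.2.2.2.2.2.1, ω'.2.2.2.2.2.2)) :=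
      htrans _ (fun t => (t.2.2.2.1, t.2.2.2.2))
    unfold mutualInfo
    rw [a1, a2, a3]
  have eZ : ent μ Z = ent ν (fun ω' => ω'.2.2.2.2.2.2) := htrans _ (fun t => t.2.2.2.2)
  -- marginals on ν
  have trip1 : ∀ (u : tX) (v : tZ) (w : B),
      prob ν (fun ω' => (ω'.2.2.1, ω'.2.2.2.2.2.2, ω'.2.1)) (u, v, w)
        = qX0 w u * (∑ av, pA av * qZ av w v) * pB w := by
    intro u v w
    unfold prob
    simp only [hνdef, Fintype.sum_prod_type, Prod.mk.injEq, ite_and,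
      Finset.sum_ite_irrel, Finset.sum_const_zero, Finset.sum_ite_eq', Finset.mem_univ, if_true]
    have inner : ∀ a, (∑ x1, ∑ y0, ∑ y1,
        qY0 a y0 * qY1 a y1 * qZ a w v * qX0 w u * qX1 w x1 * pA a * pB w)
        = qZ a w v * qX0 w u * pA a * pB w := by
      intro a
      calc ∑ x1, ∑ y0, ∑ y1,
              qY0 a y0 * qY1 a y1 * qZ a w v * qX0 w u * qX1 w x1 * pA a * pB w
          = ∑ x1, ∑ y0, ∑ y1, qX1 w x1 * qY0 a y0 * qY1 a y1
              * (qZ a w v * qX0 w u * pA a * pB w) := by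
            refine Finset.sum_congr rfl fun x1 _ => Finset.sum_congr rfl fun y0 _ =>
              Finset.sum_congr rfl fun y1 _ => by ring
        _ = (∑ x1, qX1 w x1) * (∑ y0, qY0 a y0) * (∑ y1, qY1 a y1)
              * (qZ a w v * qX0 w u * pA a * pB w) := sum3_const _ _ _ _
        _ = qZ a w v * qX0 w u * pA a * pB w := by rw [hqX11, hqY01, hqY11]; ring
    calc ∑ a, ∑ x1, ∑ y0, ∑ y1,
            qY0 a y0 * qY1 a y1 * qZ a w v * qX0 w u * qX1 w x1 * pA a * pB w
        = ∑ a, qZ a w v * qX0 w u * pA a * pB w :=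
          Finset.sum_congr rfl fun a _ => inner a
      _ = qX0 w u * (∑ av, pA av * qZ av w v) * pB w := by
          rw [Finset.mul_sum, Finset.sum_mul]
          exact Finset.sum_congr rfl fun a _ => by ring
  have trip2 : ∀ (u : tY) (v : tZ) (w : A),
      prob ν (fun ω' => (ω'.2.2.2.2.2.1, ω'.2.2.2.2.2.2, ω'.1)) (u, v, w)
        = qY1 w u * (∑ bv, pB bv * qZ w bv v) * pA w := by
    intro u v w
    unfold prob
    simp only [hνdef, Fintype.sum_prod_type, Prod.mk.injEq, ite_and,
      Finset.sum_ite_irrel, Finset.sum_const_zero, Finset.sum_ite_eq', Finset.mem_univ, if_true]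
    have inner : ∀ b, (∑ x0, ∑ x1, ∑ y0,
        qY0 w y0 * qY1 w u * qZ w b v * qX0 b x0 * qX1 b x1 * pA w * pB b)
        = qY1 w u * qZ w b v * pA w * pB b := by
      intro b
      calc ∑ x0, ∑ x1, ∑ y0,
              qY0 w y0 * qY1 w u * qZ w b v * qX0 b x0 * qX1 b x1 * pA w * pB b
          = ∑ x0, ∑ x1, ∑ y0, qX0 b x0 * qX1 b x1 * qY0 w y0
              * (qY1 w u * qZ w b v * pA w * pB b) := by
            refine Finset.sum_congr rfl fun x0 _ => Finset.sum_congr rfl fun x1 _ =>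
              Finset.sum_congr rfl fun y0 _ => by ring
        _ = (∑ x0, qX0 b x0) * (∑ x1, qX1 b x1) * (∑ y0, qY0 w y0)
              * (qY1 w u * qZ w b v * pA w * pB b) := sum3_const _ _ _ _
        _ = qY1 w u * qZ w b v * pA w * pB b := by rw [hqX01, hqX11, hqY01]; ring
    calc ∑ b, ∑ x0, ∑ x1, ∑ y0,
            qY0 w y0 * qY1 w u * qZ w b v * qX0 b x0 * qX1 b x1 * pA w * pB b
        = ∑ b, qY1 w u * qZ w b v * pA w * pB b :=
          Finset.sum_congr rfl fun b _ => inner b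
      _ = qY1 w u * (∑ bv, pB bv * qZ w bv v) * pA w := by
          rw [Finset.mul_sum, Finset.sum_mul]
          exact Finset.sum_congr rfl fun b _ => by ring
  have pairAB : ∀ (av : A) (bv : B),
      prob ν (fun ω' => (ω'.1, ω'.2.1)) (av, bv) = pA av * pB bv := by
    intro av bv
    unfold prob
    simp only [hνdef, Fintype.sum_prod_type, Prod.mk.injEq, ite_and,
      Finset.sum_ite_irrel, Finset.sum_const_zero, Finset.sum_ite_eq', Finset.mem_univ, if_true]
    calc ∑ x0, ∑ x1, ∑ y0, ∑ y1, ∑ z,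
            qY0 av y0 * qY1 av y1 * qZ av bv z * qX0 bv x0 * qX1 bv x1 * pA av * pB bv
        = ∑ x0, ∑ x1, ∑ y0, ∑ y1, ∑ z, qX0 bv x0 * qX1 bv x1 * qY0 av y0 * qY1 av y1
            * qZ av bv z * (pA av * pB bv) := by
          refine Finset.sum_congr rfl fun x0 _ => Finset.sum_congr rfl fun x1 _ =>
            Finset.sum_congr rfl fun y0 _ => Finset.sum_congr rfl fun y1 _ =>
            Finset.sum_congr rfl fun z _ => by ring
      _ = (∑ x0, qX0 bv x0) * (∑ x1, qX1 bv x1) * (∑ y0, qY0 av y0) * (∑ y1, qY1 av y1)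
            * (∑ z, qZ av bv z) * (pA av * pB bv) := sum5_const _ _ _ _ _ _
      _ = pA av * pB bv := by rw [hqX01, hqX11, hqY01, hqY11, hqZ1]; ring
  have pA' : ∀ av, prob ν (fun ω' => ω'.1) av = pA av := by
    intro av
    have hc : prob ν (fun ω' => ω'.1) av
        = ∑ p : A × B, if p.1 = av then prob ν (fun ω' => (ω'.1, ω'.2.1)) p else 0 :=
      prob_comp ν (fun ω' => (ω'.1, ω'.2.1)) (fun p => p.1) av
    rw [hc]
    calc ∑ p : A × B, (if p.1 = av then prob ν (fun ω' => (ω'.1, ω'.2.1)) p else 0)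
        = ∑ a : A, ∑ b : B, (if a = av then prob ν (fun ω' => (ω'.1, ω'.2.1)) (a, b) else 0) :=
          Fintype.sum_prod_type _
      _ = ∑ a : A, (if a = av then ∑ b : B, prob ν (fun ω' => (ω'.1, ω'.2.1)) (a, b) else 0) := by
          refine Finset.sum_congr rfl fun a _ => ?_
          split
          · rfl
          · simp
      _ = ∑ b : B, prob ν (fun ω' => (ω'.1, ω'.2.1)) (av, b) := by
          rw [Finset.sum_ite_eq']; simp
      _ = ∑ b, pA av * pB b := Finset.sum_congr rfl fun b _ => pairAB av b
      _ = pA av := by rw [← Finset.mul_sum, hpB1, mul_one]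
  have pB' : ∀ bv, prob ν (fun ω' => ω'.2.1) bv = pB bv := by
    intro bv
    have hc : prob ν (fun ω' => ω'.2.1) bv
        = ∑ p : A × B, if p.2 = bv then prob ν (fun ω' => (ω'.1, ω'.2.1)) p else 0 :=
      prob_comp ν (fun ω' => (ω'.1, ω'.2.1)) (fun p => p.2) bv
    rw [hc]
    calc ∑ p : A × B, (if p.2 = bv then prob ν (fun ω' => (ω'.1, ω'.2.1)) p else 0)
        = ∑ a : A, ∑ b : B, (if b = bv then prob ν (fun ω' => (ω'.1, ω'.2.1)) (a, b) else 0) :=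
          Fintype.sum_prod_type _
      _ = ∑ a : A, prob ν (fun ω' => (ω'.1, ω'.2.1)) (a, bv) := by
          refine Finset.sum_congr rfl fun a _ => ?_
          rw [Finset.sum_ite_eq']; simp
      _ = ∑ a, pA a * pB bv := Finset.sum_congr rfl fun a _ => pairAB a bv
      _ = pB bv := by rw [← Finset.sum_mul, hpA1, one_mul]
  -- data processing
  have hz1 : condMutualInfo ν (fun ω' => ω'.2.2.1) (fun ω' => ω'.2.2.2.2.2.2)
      (fun ω' => ω'.2.1) = 0 := by
    refine condMutualInfo_eq_zero_of_product ν _ _ _ (fun u w => qX0 w u)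
      (fun v w => ∑ av, pA av * qZ av w v) pB (fun u v w => trip1 u v w)
      (fun w => hqX01 w) ?_
    intro w
    rw [Finset.sum_comm]
    calc ∑ av, ∑ v, pA av * qZ av w v = ∑ av, pA av :=
          Finset.sum_congr rfl fun av _ => by rw [← Finset.mul_sum, hqZ1, mul_one]
      _ = 1 := hpA1
  have hz2 : condMutualInfo ν (fun ω' => ω'.2.2.2.2.2.1) (fun ω' => ω'.2.2.2.2.2.2)
      (fun ω' => ω'.1) = 0 := by
    refine condMutualInfo_eq_zero_of_product ν _ _ _ (fun u w => qY1 w u)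
      (fun v w => ∑ bv, pB bv * qZ w bv v) pA (fun u v w => trip2 u v w)
      (fun w => hqY11 w) ?_
    intro w
    rw [Finset.sum_comm]
    calc ∑ bv, ∑ v, pB bv * qZ w bv v = ∑ bv, pB bv :=
          Finset.sum_congr rfl fun bv _ => by rw [← Finset.mul_sum, hqZ1, mul_one]
      _ = 1 := hpB1
  have dp1 : mutualInfo ν (fun ω' => ω'.2.2.1) (fun ω' => ω'.2.2.2.2.2.2)
      ≤ mutualInfo ν (fun ω' => ω'.2.1) (fun ω' => ω'.2.2.2.2.2.2) :=
    mutualInfo_le_of_condIndep ν hνP _ _ _ hz1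
  have dp2 : mutualInfo ν (fun ω' => ω'.2.2.2.2.2.1) (fun ω' => ω'.2.2.2.2.2.2)
      ≤ mutualInfo ν (fun ω' => ω'.1) (fun ω' => ω'.2.2.2.2.2.2) :=
    mutualInfo_le_of_condIndep ν hνP _ _ _ hz2
  -- independence bound
  have hind : ent ν (fun ω' => (ω'.1, ω'.2.1))
      = ent ν (fun ω' => ω'.1) + ent ν (fun ω' => ω'.2.1) :=
    ent_pair_eq_add ν _ _ pA pB
      (fun p => by obtain ⟨av, bv⟩ := p; exact pairAB av bv) pA' pB' hpA1 hpB1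
  have hmono : ent ν (fun ω' => (ω'.1, ω'.2.1))
      ≤ ent ν (fun ω' => (ω'.1, ω'.2.1, ω'.2.2.2.2.2.2)) :=
    ent_comp_le ν hν0 (fun ω' => (ω'.1, ω'.2.1, ω'.2.2.2.2.2.2)) (fun t => (t.1, t.2.1))
  have hsub := condMutualInfo_nonneg ν hνP (fun ω' => ω'.1) (fun ω' => ω'.2.1)
    (fun ω' => ω'.2.2.2.2.2.2)
  have h8 : mutualInfo ν (fun ω' => ω'.1) (fun ω' => ω'.2.2.2.2.2.2)
      + mutualInfo ν (fun ω' => ω'.2.1) (fun ω' => ω'.2.2.2.2.2.2)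
      ≤ ent ν (fun ω' => ω'.2.2.2.2.2.2) := by
    unfold condMutualInfo at hsub
    unfold mutualInfo
    linarith [hsub, hmono, hind]
  have hnn1 := mutualInfo_nonneg ν hνP (fun ω' => ω'.2.2.2.2.1) (fun ω' => ω'.2.2.2.2.2.2)
  have hnn2 := mutualInfo_nonneg ν hνP (fun ω' => ω'.2.2.2.1) (fun ω' => ω'.2.2.2.2.2.2)
  rw [m0, m1, mY0, mY1, eZ]
  linarith [hnn1, hnn2, dp1, dp2, h8]
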